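/- arXiv:2004.08792 — 7 statements merged into one kernel-verified Lean document; each statement's English description precedes it below -/
import Mathlib

section
/- The formal power series M(t) = \sum_{n\ge 0} \frac{2\cdot 3^n}{(n+1)(n+2)}\binom{2n}{n} t^n satisfies the algebraic equation M(t) = 1 - 16t + 18t\,M(t) - 27t^2 M(t)^2. -/
/-- The generating function of rooted planar maps by edges. -/
noncomputable def M : PowerSeries ℚ :=
  PowerSeries.mk fun n =>
    (2 * 3 ^ n * (Nat.choose (2 * n) n : ℚ)) / (((n : ℚ) + 1) * ((n : ℚ) + 2))

open PowerSeries

private lemma c12 : (12 : ℚ⟦X⟧) = C 12 := (map_ofNat _ _).symm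
private lemma c36 : (36 : ℚ⟦X⟧) = C 36 := (map_ofNat _ _).symm
private lemma c18 : (18 : ℚ⟦X⟧) = C 18 := (map_ofNat _ _).symm
private lemma c54 : (54 : ℚ⟦X⟧) = C 54 := (map_ofNat _ _).symm

private lemma m_rec (k : ℕ) :
    ((k : ℚ) + 3) * PowerSeries.coeff (k+1) M
      = 6 * (2 * (k : ℚ) + 1) * PowerSeries.coeff k M := by
  rw [M, coeff_mk, coeff_mk]
  have hk1 : ((k : ℚ) + 1) ≠ 0 := by positivity
  have hcb : ((k : ℚ) + 1) * (Nat.centralBinom (k+1) : ℚ)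
      = 2 * (2 * (k : ℚ) + 1) * (Nat.centralBinom k : ℚ) := by
    have := Nat.succ_mul_centralBinom_succ k
    have h2 := congrArg (Nat.cast : ℕ → ℚ) this
    push_cast at h2
    linarith [h2]
  have h1 : ((2 * (k+1)).choose (k+1) : ℚ) = (Nat.centralBinom (k+1) : ℚ) := rfl
  have h2 : ((2 * k).choose k : ℚ) = (Nat.centralBinom k : ℚ) := rfl
  have hB1 : (Nat.centralBinom (k+1) : ℚ)
      = 2 * (2 * (k : ℚ) + 1) * (Nat.centralBinom k : ℚ) / ((k : ℚ) + 1) := by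
    field_simp
    linarith [hcb]
  rw [h1, hB1, h2]
  have hk2 : ((k : ℚ) + 2) ≠ 0 := by positivity
  have hk3 : ((k : ℚ) + 3) ≠ 0 := by positivity
  push_cast
  field_simp
  ring

noncomputable def Naux : ℚ⟦X⟧ := 1 - 18 * X + 54 * X ^ 2 * M

private lemma cN0 : PowerSeries.coeff 0 Naux = 1 := by
  rw [Naux, mul_assoc, map_add, map_sub, c18, c54, coeff_C_mul, coeff_C_mul]
  simp [coeff_X_pow_mul']

private lemma cN1 : PowerSeries.coeff 1 Naux = -18 := by
  rw [Naux, mul_assoc, map_add, map_sub, c18, c54, coeff_C_mul, coeff_C_mul]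
  simp [coeff_X_pow_mul']

private lemma cN (k : ℕ) : PowerSeries.coeff (k+2) Naux = 54 * PowerSeries.coeff k M := by
  rw [Naux, mul_assoc, map_add, map_sub, c18, c54, coeff_C_mul, coeff_C_mul]
  have := coeff_X_pow_mul M 2 k
  simp only [coeff_one, coeff_X] at *
  rw [this]
  norm_num
  omega

private lemma nu_rec (n : ℕ) :
    ((n : ℚ) + 1) * PowerSeries.coeff (n+1) Naux
      = (12 * (n : ℚ) - 18) * PowerSeries.coeff n Naux := by
  match n with
  | 0 => rw [cN0, cN1]; norm_num
  | 1 =>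
    have h0 : PowerSeries.coeff 0 M = 1 := by rw [M, coeff_mk]; norm_num
    rw [cN1, show (1:ℕ)+1 = 0+2 from rfl, cN 0, h0]; norm_num
  | (k+2) =>
    rw [show k+2+1 = (k+1)+2 from rfl, cN (k+1), cN k]
    push_cast
    linear_combination 54 * m_rec k

private lemma coeff_X_mul_D (f : ℚ⟦X⟧) (n : ℕ) :
    PowerSeries.coeff n (X * d⁄dX ℚ f) = (n : ℚ) * PowerSeries.coeff n f := by
  cases n with
  | zero => simp
  | succ k =>
    rw [coeff_succ_X_mul, coeff_derivative]
    push_cast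
    ring

private lemma ode_N : (1 - 12 * X) * d⁄dX ℚ Naux = -(18 * Naux) := by
  ext n
  rw [sub_mul, one_mul, map_sub, map_neg, mul_assoc, c12, coeff_C_mul, coeff_X_mul_D,
    coeff_derivative, c18, coeff_C_mul]
  linear_combination nu_rec n

private lemma ode_N2 : (1 - 12 * X) * d⁄dX ℚ (Naux ^ 2) = -(36 * Naux ^ 2) := by
  rw [sq, Derivation.leibniz]; simp only [smul_eq_mul]
  linear_combination (2 * Naux) * ode_N

private lemma dee : d⁄dX ℚ (1 - 12 * X : ℚ⟦X⟧) = -12 := by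
  have h12 : (12 : ℚ⟦X⟧) = ((12:ℕ) : ℚ⟦X⟧) := by norm_num
  rw [map_sub, Derivation.leibniz, derivative_X, h12, Derivation.map_natCast]
  simp [smul_eq_mul]

private lemma ode_cube :
    (1 - 12 * X) * d⁄dX ℚ ((1 - 12 * X : ℚ⟦X⟧) ^ 3) = -(36 * (1 - 12 * X) ^ 3) := by
  rw [Derivation.leibniz_pow, dee]
  simp only [smul_eq_mul, nsmul_eq_mul]
  push_cast
  ring

private lemma ode_unique (P Q : ℚ⟦X⟧)
    (hP : (1 - 12 * X) * d⁄dX ℚ P = -(36 * P))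
    (hQ : (1 - 12 * X) * d⁄dX ℚ Q = -(36 * Q))
    (h0 : PowerSeries.coeff 0 P = PowerSeries.coeff 0 Q) : P = Q := by
  ext n
  induction n with
  | zero => exact h0
  | succ k ih =>
    have hPk := congrArg (PowerSeries.coeff k) hP
    have hQk := congrArg (PowerSeries.coeff k) hQ
    rw [sub_mul, one_mul, map_sub, map_neg, mul_assoc, c12, coeff_C_mul, coeff_X_mul_D,
      coeff_derivative, c36, coeff_C_mul] at hPk hQk
    have hk : ((k : ℚ) + 1) ≠ 0 := by positivity
    have key : PowerSeries.coeff (k+1) P * ((k:ℚ)+1)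
        = PowerSeries.coeff (k+1) Q * ((k:ℚ)+1) := by
      push_cast at hPk hQk ⊢
      linear_combination hPk - hQk + (12 * (k:ℚ) - 36) * ih
    exact mul_right_cancel₀ hk key

theorem planar_maps_gf_algebraic :
    M = 1 - 16 * PowerSeries.X + 18 * PowerSeries.X * M
        - 27 * PowerSeries.X ^ 2 * M ^ 2 := by
  have e1 : PowerSeries.coeff 0 (Naux ^ 2) = 1 := by
    rw [coeff_zero_eq_constantCoeff, map_pow, ← coeff_zero_eq_constantCoeff, cN0]
    norm_num
  have e2 : PowerSeries.coeff 0 ((1 - 12 * X : ℚ⟦X⟧) ^ 3) = 1 := by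
    rw [coeff_zero_eq_constantCoeff, map_pow]
    simp
  have key : Naux ^ 2 = (1 - 12 * X : ℚ⟦X⟧) ^ 3 :=
    ode_unique _ _ ode_N2 ode_cube (e1.trans e2.symm)
  rw [Naux] at key
  have h108 : (108 : ℚ⟦X⟧) * X ^ 2 ≠ 0 := by
    apply mul_ne_zero ?_ (pow_ne_zero _ X_ne_zero)
    rw [show (108:ℚ⟦X⟧) = C 108 from (map_ofNat _ _).symm]
    simpa using (by norm_num : (108:ℚ) ≠ 0)
  apply mul_left_cancel₀ h108
  linear_combination key
end

section
/- Let T(t) be the formal power series satisfying T(t) = 1 + 3t\,T(t)^2 with T(0)=1, and let M(t) = T(t) - t\,T(t)^3. Then the coefficient of t^n in M(t) equals \frac{2\cdot 3^n}{(n+1)(n+2)}\binom{2n}{n}. -/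
open PowerSeries Finset

theorem four_valent_maps_coeff (T : PowerSeries ℚ)
    (h0 : PowerSeries.constantCoeff T = 1)
    (hT : T = 1 + 3 * PowerSeries.X * T ^ 2) (n : ℕ) :
    PowerSeries.coeff n (T - PowerSeries.X * T ^ 3) =
      2 * 3 ^ n * (Nat.choose (2 * n) n : ℚ) / (((n : ℚ) + 1) * ((n : ℚ) + 2)) := by
  have hrec : ∀ m : ℕ, coeff (m+1) T
      = 3 * ∑ p ∈ antidiagonal m, coeff p.1 T * coeff p.2 T := by
    intro m
    conv_lhs => rw [hT]
    have h3 : (3 : PowerSeries ℚ) * X * T ^ 2 = X * (PowerSeries.C 3 * (T * T)) := by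
      rw [map_ofNat]; ring
    rw [map_add, h3, coeff_succ_X_mul, coeff_C_mul, coeff_mul]
    simp
  have ha : ∀ m : ℕ, coeff m T = 3 ^ m * (catalan m : ℚ) := by
    intro m
    induction m using Nat.strong_induction_on with
    | _ m ih =>
      match m with
      | 0 => simpa using h0
      | m + 1 =>
        rw [hrec m, catalan_succ' m]
        push_cast
        rw [Finset.mul_sum, Finset.mul_sum]
        apply Finset.sum_congr rfl
        intro p hp
        have hpm : p.1 + p.2 = m := Finset.HasAntidiagonal.mem_antidiagonal.mp hp
        rw [ih p.1 (by omega), ih p.2 (by omega), ← hpm]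
        ring
  -- series identity
  have h2 : (9 : PowerSeries ℚ) * (T - X * T ^ 3) = 12 * T - 3 * T ^ 2 := by
    linear_combination (3 * T) * hT
  have h2c : (9 : ℚ) * coeff n (T - X * T ^ 3) = 12 * coeff n T - 3 * coeff n (T ^ 2) := by
    have := congrArg (coeff n) h2
    have e9 : (9 : PowerSeries ℚ) = PowerSeries.C 9 := by rw [map_ofNat]
    have e12 : (12 : PowerSeries ℚ) = PowerSeries.C 12 := by rw [map_ofNat]
    have e3 : (3 : PowerSeries ℚ) = PowerSeries.C 3 := by rw [map_ofNat]
    rw [e9, e12, e3, map_sub, coeff_C_mul, coeff_C_mul, coeff_C_mul] at this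
    exact this
  have hsq : coeff (n+1) T = 3 * coeff n (T ^ 2) := by
    conv_lhs => rw [hT]
    have h3 : (3 : PowerSeries ℚ) * X * T ^ 2 = X * (PowerSeries.C 3 * T ^ 2) := by
      rw [map_ofNat]; ring
    rw [map_add, h3, coeff_succ_X_mul, coeff_C_mul]
    simp
  -- numerics
  have hc : ((n : ℚ) + 1) * (catalan n : ℚ) = (Nat.choose (2*n) n : ℚ) := by
    have := succ_mul_catalan_eq_centralBinom n
    have : ((n+1) * catalan n : ℕ) = ((2*n).choose n : ℕ) := this
    exact_mod_cast this
  have hc2 : ((n : ℚ) + 2) * (catalan (n+1) : ℚ) = (Nat.centralBinom (n+1) : ℚ) := by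
    have := succ_mul_catalan_eq_centralBinom (n+1)
    exact_mod_cast this
  have hc3 : ((n : ℚ) + 1) * (Nat.centralBinom (n+1) : ℚ) = 2 * (2*(n:ℚ)+1) * (Nat.choose (2*n) n : ℚ) := by
    have h := Nat.succ_mul_centralBinom_succ n
    have h' : ((n+1) * Nat.centralBinom (n+1) : ℕ) = (2 * (2*n+1) * Nat.centralBinom n : ℕ) := h
    have : ((n:ℚ)+1) * (Nat.centralBinom (n+1) : ℚ) = 2 * (2*(n:ℚ)+1) * (Nat.centralBinom n : ℚ) := by
      exact_mod_cast h'
    rw [this]; rfl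
  have key : (9 : ℚ) * coeff n (T - X * T ^ 3) = 12 * (3^n * (catalan n : ℚ)) - 3^(n+1) * (catalan (n+1) : ℚ) := by
    rw [h2c, ha n]
    have : (3:ℚ) * coeff n (T ^ 2) = 3^(n+1) * (catalan (n+1) : ℚ) := by
      rw [← hsq, ha (n+1)]
    linarith [this]
  have hn1 : ((n:ℚ)+1) ≠ 0 := by positivity
  have hn2 : ((n:ℚ)+2) ≠ 0 := by positivity
  have h9 : (9:ℚ) ≠ 0 := by norm_num
  rw [eq_div_iff (by positivity : ((n:ℚ)+1) * ((n:ℚ)+2) ≠ 0)]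
  linear_combination (1/9 * ((n:ℚ)+1) * ((n:ℚ)+2)) * key + (4 * 3^n * ((n:ℚ)+2) / 3) * hc - (3^n * ((n:ℚ)+1) / 3) * hc2 - (3^n / 3) * hc3
end

section
/- Let V \equiv V(w,z,t;u) be the unique formal power series in t with zero constant term satisfying V = t(z + (u + w/u)V + V^2), with coefficients in \mathbb{Q}[w,z,u,1/u]. Then the coefficient of w^i z^j t^n u^{n+1-2i-2j} in V equals \frac{(n-1)!}{i!\,(j-1)!\,j!\,(n+1-i-2j)!} (whenever all factorial arguments are nonnegative). -/
/-- The coefficient ring `ℚ[w,z][u,1/u]` (Laurent series in `u` containing the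
Laurent polynomials in `u`) with polynomial coefficients in `w = X 0`, `z = X 1`. -/
abbrev R9 : Type := LaurentSeries (MvPolynomial (Fin 2) ℚ)

noncomputable def u9 : R9 := HahnSeries.single (1 : ℤ) 1
noncomputable def uinv9 : R9 := HahnSeries.single (-1 : ℤ) 1
noncomputable def w9 : R9 := HahnSeries.C (MvPolynomial.X 0)
noncomputable def z9 : R9 := HahnSeries.C (MvPolynomial.X 1)

open Finset

/-- The element `a = u + w/u`. -/
noncomputable def a9 : R9 := u9 + w9 * uinv9

/-- Scalar constants embedded into `R9`. -/
noncomputable def q9 : ℚ →+* R9 :=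
  (HahnSeries.C : MvPolynomial (Fin 2) ℚ →+* R9).comp (MvPolynomial.C)

/-- The coefficient of `z^p a^(n+k-2p)` in the `t^n`-coefficient of `V^k`. -/
noncomputable def co (n k p : ℕ) : ℚ :=
  if k ≤ p ∧ 2*p ≤ n + k then
    (k : ℚ) * (Nat.factorial (n-1)) /
      ((Nat.factorial p) * (Nat.factorial (n+k-2*p)) * (Nat.factorial (p-k)))
  else 0

/-- `T9 n k` will be shown to equal the `t^n`-coefficient of `V^k`. -/
noncomputable def T9 (n k : ℕ) : R9 :=
  ∑ p ∈ Finset.range (n+2), q9 (co n k p) * z9 ^ p * a9 ^ (n + k - 2*p)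

lemma co_of {n k p : ℕ} (h1 : k ≤ p) (h2 : 2*p ≤ n + k) :
    co n k p = (k : ℚ) * (Nat.factorial (n-1)) /
      ((Nat.factorial p) * (Nat.factorial (n+k-2*p)) * (Nat.factorial (p-k))) := by
  rw [co, if_pos ⟨h1, h2⟩]

lemma co_not {n k p : ℕ} (h : ¬(k ≤ p ∧ 2*p ≤ n + k)) : co n k p = 0 := by
  rw [co, if_neg h]

lemma co_k0 (n p : ℕ) : co n 0 p = 0 := by rw [co]; split <;> simp

lemma co_p0 (n k : ℕ) : co n k 0 = 0 := by
  rcases Nat.eq_zero_or_pos k with hk | hk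
  · subst hk; exact co_k0 n 0
  · exact co_not (by rintro ⟨a, b⟩; omega)

lemma co_big {n k p : ℕ} (h : n < p) : co n k p = 0 :=
  co_not (by rintro ⟨a, b⟩; omega)

lemma co_nk {n k p : ℕ} (h : n < k) : co n k p = 0 :=
  co_not (by rintro ⟨a, b⟩; omega)

lemma T9_nk {n k : ℕ} (h : n < k) : T9 n k = 0 := by
  rw [T9]
  refine Finset.sum_eq_zero fun p _ => ?_
  rw [co_nk h, map_zero, zero_mul, zero_mul]

lemma T9_k0 (n : ℕ) : T9 n 0 = 0 := by
  rw [T9]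
  refine Finset.sum_eq_zero fun p _ => ?_
  rw [co_k0, map_zero, zero_mul, zero_mul]

lemma fact_cast_succ {m : ℕ} (hm : 1 ≤ m) :
    (Nat.factorial m : ℚ) = m * (Nat.factorial (m-1)) := by
  obtain ⟨m', rfl⟩ : ∃ m', m = m' + 1 := ⟨m - 1, by omega⟩
  rw [Nat.factorial_succ]
  push_cast
  simp

lemma co_succ (n k p : ℕ) (hn : 1 ≤ n) (hk : 1 ≤ k) :
    co (n+1) k p = co n (k-1) (p-1) + co n k p + co n (k+1) p := by
  by_cases H : k ≤ p ∧ 2*p ≤ (n+1) + k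
  · obtain ⟨H1, H2⟩ := H
    have hp : 1 ≤ p := le_trans hk H1
    obtain ⟨q, hqd⟩ : ∃ q, q = n+1+k-2*p := ⟨_, rfl⟩
    obtain ⟨r, hrd⟩ : ∃ r, r = p - k := ⟨_, rfl⟩
    have e0 : co (n+1) k p = (k : ℚ) * (Nat.factorial n) /
        ((Nat.factorial p) * (Nat.factorial q) * (Nat.factorial r)) := by
      have c1 : (n+1)-1 = n := by omega
      have c2 : (n+1)+k-2*p = q := by omega
      have c3 : p-k = r := by omega
      rw [co_of H1 H2, c1, c2, c3]
    have e1 : co n (k-1) (p-1) = ((k : ℚ) - 1) * (Nat.factorial (n-1)) /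
        ((Nat.factorial (p-1)) * (Nat.factorial q) * (Nat.factorial r)) := by
      rcases Nat.lt_or_ge k 2 with hk2 | hk2
      · have hk1 : k = 1 := by omega
        subst hk1
        norm_num [co_k0]
      · have c1 : n + (k-1) - 2*(p-1) = q := by omega
        have c2 : (p-1) - (k-1) = r := by omega
        have c3 : ((k - 1 : ℕ) : ℚ) = (k : ℚ) - 1 := by push_cast [hk]; ring
        rw [co_of (by omega) (by omega), c1, c2, c3]
    have Fne : ∀ m : ℕ, (Nat.factorial m : ℚ) ≠ 0 :=
      fun m => Nat.cast_ne_zero.mpr (Nat.factorial_ne_zero _)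
    have fp : (Nat.factorial p : ℚ) = p * (Nat.factorial (p-1)) := fact_cast_succ hp
    have fn : (Nat.factorial n : ℚ) = n * (Nat.factorial (n-1)) := fact_cast_succ hn
    have hp0 : (p : ℚ) ≠ 0 := Nat.cast_ne_zero.mpr (by omega)
    have hkq : (k : ℚ) = (p : ℚ) - (r : ℚ) := by
      have h' : k + r = p := by omega
      have h'' : ((k:ℚ) + r) = (p : ℚ) := by exact_mod_cast congrArg (Nat.cast : ℕ → ℚ) h'
      linarith
    have hnq : (n : ℚ) = (p : ℚ) + q + r - 1 := by
      have h' : p + q + r = n + 1 := by omega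
      have h'' : ((p:ℚ) + q + r) = (n : ℚ) + 1 := by exact_mod_cast congrArg (Nat.cast : ℕ → ℚ) h'
      linarith
    have F1 := Fne (p-1); have F2 := Fne (n-1); have F3 := Fne (q-1); have F4 := Fne (r-1)
    have F5 := Fne q; have F6 := Fne r
    rcases Nat.eq_zero_or_pos q with hq1 | hq1 <;> rcases Nat.eq_zero_or_pos r with hr1 | hr1
    · -- q = 0, r = 0
      have e2 : co n k p = 0 := co_not (by rintro ⟨a, b⟩; omega)
      have e3 : co n (k+1) p = 0 := co_not (by rintro ⟨a, b⟩; omega)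
      rw [e0, e1, e2, e3, fn, fp, hkq, hnq, hq1, hr1]
      norm_num [Nat.factorial]
      field_simp
    · -- q = 0, r ≥ 1
      have e2 : co n k p = 0 := co_not (by rintro ⟨a, b⟩; omega)
      have e3 : co n (k+1) p = ((k : ℚ) + 1) * (Nat.factorial (n-1)) /
          ((Nat.factorial p) * (Nat.factorial q) * (Nat.factorial (r-1))) := by
        have c1 : n + (k+1) - 2*p = q := by omega
        have c2 : p - (k+1) = r - 1 := by omega
        rw [co_of (by omega) (by omega), c1, c2]
        push_cast
        ring
      have fr : (Nat.factorial r : ℚ) = r * (Nat.factorial (r-1)) := fact_cast_succ hr1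
      have hr0 : (r : ℚ) ≠ 0 := Nat.cast_ne_zero.mpr (by omega)
      rw [e0, e1, e2, e3, fn, fp, fr, hkq, hnq, hq1]
      norm_num [Nat.factorial]
      field_simp
      ring
    · -- q ≥ 1, r = 0
      have e2 : co n k p = (k : ℚ) * (Nat.factorial (n-1)) /
          ((Nat.factorial p) * (Nat.factorial (q-1)) * (Nat.factorial r)) := by
        have c1 : n + k - 2*p = q - 1 := by omega
        have c2 : p - k = r := by omega
        rw [co_of (by omega) (by omega), c1, c2]
      have e3 : co n (k+1) p = 0 := co_not (by rintro ⟨a, b⟩; omega)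
      have fq : (Nat.factorial q : ℚ) = q * (Nat.factorial (q-1)) := fact_cast_succ hq1
      have hq0 : (q : ℚ) ≠ 0 := Nat.cast_ne_zero.mpr (by omega)
      rw [e0, e1, e2, e3, fn, fp, fq, hkq, hnq, hr1]
      norm_num [Nat.factorial]
      field_simp
      ring
    · -- q ≥ 1, r ≥ 1
      have e2 : co n k p = (k : ℚ) * (Nat.factorial (n-1)) /
          ((Nat.factorial p) * (Nat.factorial (q-1)) * (Nat.factorial r)) := by
        have c1 : n + k - 2*p = q - 1 := by omega
        have c2 : p - k = r := by omega
        rw [co_of (by omega) (by omega), c1, c2]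
      have e3 : co n (k+1) p = ((k : ℚ) + 1) * (Nat.factorial (n-1)) /
          ((Nat.factorial p) * (Nat.factorial q) * (Nat.factorial (r-1))) := by
        have c1 : n + (k+1) - 2*p = q := by omega
        have c2 : p - (k+1) = r - 1 := by omega
        rw [co_of (by omega) (by omega), c1, c2]
        push_cast
        ring
      have fq : (Nat.factorial q : ℚ) = q * (Nat.factorial (q-1)) := fact_cast_succ hq1
      have fr : (Nat.factorial r : ℚ) = r * (Nat.factorial (r-1)) := fact_cast_succ hr1
      have hq0 : (q : ℚ) ≠ 0 := Nat.cast_ne_zero.mpr (by omega)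
      have hr0 : (r : ℚ) ≠ 0 := Nat.cast_ne_zero.mpr (by omega)
      rw [e0, e1, e2, e3, fn, fp, fq, fr, hkq, hnq]
      field_simp
      ring
  · have hL : co (n+1) k p = 0 := co_not (by rintro ⟨a, b⟩; exact H ⟨a, by omega⟩)
    have h2 : co n k p = 0 := co_not (by rintro ⟨a, b⟩; exact H ⟨a, by omega⟩)
    have h3 : co n (k+1) p = 0 := co_not (by rintro ⟨a, b⟩; exact H ⟨by omega, by omega⟩)
    have h1 : co n (k-1) (p-1) = 0 := by
      rcases Nat.lt_or_ge k 2 with hk2 | hk2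
      · have hk1 : k = 1 := by omega
        subst hk1
        norm_num [co_k0]
      · exact co_not (by rintro ⟨a, b⟩; exact H ⟨by omega, by omega⟩)
    rw [hL, h1, h2, h3]
    ring

set_option maxHeartbeats 1000000 in
lemma T9_step (n k : ℕ) (hn : 1 ≤ n) (hk : 1 ≤ k) :
    T9 (n+1) k = z9 * T9 n (k-1) + a9 * T9 n k + T9 n (k+1) := by
  have expand : T9 (n+1) k = ∑ p ∈ range (n+3),
      (q9 (co n (k-1) (p-1)) * z9 ^ p * a9 ^ ((n+1) + k - 2*p)
       + q9 (co n k p) * z9 ^ p * a9 ^ ((n+1) + k - 2*p)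
       + q9 (co n (k+1) p) * z9 ^ p * a9 ^ ((n+1) + k - 2*p)) := by
    rw [T9]
    refine Finset.sum_congr rfl fun p _ => ?_
    rw [co_succ n k p hn hk, map_add, map_add]
    ring
  have h1 : (∑ p ∈ range (n+3), q9 (co n (k-1) (p-1)) * z9 ^ p * a9 ^ ((n+1) + k - 2*p))
      = z9 * T9 n (k-1) := by
    rw [Finset.sum_range_succ']
    have h0 : q9 (co n (k-1) (0-1)) * z9 ^ 0 * a9 ^ ((n+1) + k - 2*0) = 0 := by
      rw [Nat.zero_sub, co_p0, map_zero, zero_mul, zero_mul]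
    rw [h0, add_zero, T9, Finset.mul_sum]
    refine Finset.sum_congr rfl fun p _ => ?_
    have c1 : p + 1 - 1 = p := by omega
    have c2 : (n+1) + k - 2*(p+1) = n + (k-1) - 2*p := by omega
    rw [c1, c2, pow_succ]
    ring
  have h2 : (∑ p ∈ range (n+3), q9 (co n k p) * z9 ^ p * a9 ^ ((n+1) + k - 2*p))
      = a9 * T9 n k := by
    rw [Finset.sum_range_succ]
    have h0 : q9 (co n k (n+2)) * z9 ^ (n+2) * a9 ^ ((n+1) + k - 2*(n+2)) = 0 := by
      rw [co_big (by omega), map_zero, zero_mul, zero_mul]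
    rw [h0, add_zero, T9, Finset.mul_sum]
    refine Finset.sum_congr rfl fun p _ => ?_
    by_cases h2p : 2*p ≤ n + k
    · have c : (n+1) + k - 2*p = (n + k - 2*p) + 1 := by omega
      rw [c, pow_succ]
      ring
    · rw [co_not (by rintro ⟨a, b⟩; omega), map_zero]
      simp
  have h3 : (∑ p ∈ range (n+3), q9 (co n (k+1) p) * z9 ^ p * a9 ^ ((n+1) + k - 2*p))
      = T9 n (k+1) := by
    rw [Finset.sum_range_succ]
    have h0 : q9 (co n (k+1) (n+2)) * z9 ^ (n+2) * a9 ^ ((n+1) + k - 2*(n+2)) = 0 := by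
      rw [co_big (by omega), map_zero, zero_mul, zero_mul]
    rw [h0, add_zero, T9]
    refine Finset.sum_congr rfl fun p _ => ?_
    have c : (n+1) + k - 2*p = n + (k+1) - 2*p := by omega
    rw [c]
  rw [expand]
  simp only [Finset.sum_add_distrib]
  rw [h1, h2, h3]

lemma T9_11 : T9 1 1 = z9 := by
  have c11 : co 1 1 1 = 1 := by
    rw [co_of le_rfl (by norm_num)]
    norm_num [Nat.factorial]
  rw [T9]
  rw [Finset.sum_range_succ, Finset.sum_range_succ, Finset.sum_range_succ,
    Finset.sum_range_zero]
  rw [co_p0, c11, co_big (by norm_num)]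
  simp

theorem main_lemma (V : PowerSeries R9)
    (h0 : PowerSeries.constantCoeff V = 0)
    (hV : V = PowerSeries.X *
        (PowerSeries.C z9 + PowerSeries.C (u9 + w9 * uinv9) * V + V ^ 2)) :
    ∀ n k : ℕ, 1 ≤ k → PowerSeries.coeff n (V ^ k) = T9 n k := by
  intro n
  induction n with
  | zero =>
    intro k hk
    rw [T9_nk (by omega), PowerSeries.coeff_zero_eq_constantCoeff, map_pow, h0,
      zero_pow (by omega)]
  | succ n ih =>
    intro k hk
    obtain ⟨m, rfl⟩ : ∃ m, k = m + 1 := ⟨k - 1, by omega⟩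
    have ha : a9 = u9 + w9 * uinv9 := rfl
    have hrec : V ^ (m+1) = PowerSeries.X * (PowerSeries.C z9 * V^m
        + PowerSeries.C a9 * V^(m+1) + V^(m+2)) := by
      have h1 : V ^ (m+1) = V^m * (PowerSeries.X *
          (PowerSeries.C z9 + PowerSeries.C a9 * V + V^2)) := by
        rw [pow_succ, ha]
        exact congrArg (fun W => V^m * W) hV
      conv_lhs => rw [h1]
      ring
    rw [hrec, PowerSeries.coeff_succ_X_mul, map_add, map_add,
      PowerSeries.coeff_C_mul, PowerSeries.coeff_C_mul,
      ih (m+1) (by omega), ih (m+2) (by omega)]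
    rcases Nat.eq_zero_or_pos m with rfl | hm
    · rcases Nat.eq_zero_or_pos n with rfl | hn
      · rw [pow_zero, PowerSeries.coeff_zero_eq_constantCoeff, map_one,
          T9_nk (by omega), T9_nk (by omega), T9_11]
        ring
      · rw [pow_zero, PowerSeries.coeff_one, if_neg (by omega),
          T9_step n 1 hn le_rfl, show (1:ℕ)-1 = 0 from rfl, T9_k0]
    · rw [ih m (by omega)]
      rcases Nat.eq_zero_or_pos n with rfl | hn
      · rw [T9_nk (by omega), T9_nk (by omega), T9_nk (by omega), T9_nk (by omega)]
        ring
      · rw [T9_step n (m+1) hn (by omega), show m+1-1 = m from rfl]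

/-- coefficient extraction as an additive hom -/
noncomputable def coeffHom (m : ℤ) : R9 →+ MvPolynomial (Fin 2) ℚ where
  toFun x := x.coeff m
  map_zero' := HahnSeries.coeff_zero
  map_add' _ _ := HahnSeries.coeff_add

lemma a9_single : a9 = HahnSeries.single (1:ℤ) 1
    + HahnSeries.single (-1:ℤ) (MvPolynomial.X 0) := by
  rw [a9, u9, w9, uinv9]
  congr 1
  rw [HahnSeries.C_apply, HahnSeries.single_mul_single]
  norm_num

lemma term_eq (c : ℚ) (p e : ℕ) :
    q9 c * z9^p * a9^e = ∑ s ∈ range (e+1),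
      HahnSeries.single ((s:ℤ) - ((e-s : ℕ) : ℤ))
        (MvPolynomial.C c * (MvPolynomial.X 1)^p *
          ((MvPolynomial.X 0)^(e-s) * MvPolynomial.C ((e.choose s : ℕ) : ℚ))) := by
  have hq : q9 c = HahnSeries.single (0:ℤ) (MvPolynomial.C c) := by
    rw [q9, RingHom.comp_apply, HahnSeries.C_apply]
  have hz : z9^p = HahnSeries.single (0:ℤ) ((MvPolynomial.X 1)^p) := by
    rw [z9, ← map_pow, HahnSeries.C_apply]
  rw [a9_single, add_pow, Finset.mul_sum]
  refine Finset.sum_congr rfl fun s hs => ?_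
  have hch : ((e.choose s : ℕ) : R9)
      = HahnSeries.single (0:ℤ) (MvPolynomial.C ((e.choose s : ℕ) : ℚ)) := by
    rw [← HahnSeries.C_apply, ← map_natCast (HahnSeries.C : MvPolynomial (Fin 2) ℚ →+* R9),
      ← map_natCast (MvPolynomial.C : ℚ →+* MvPolynomial (Fin 2) ℚ)]
  rw [hq, hz, hch, HahnSeries.single_pow, HahnSeries.single_pow, one_pow,
    HahnSeries.single_mul_single, HahnSeries.single_mul_single,
    HahnSeries.single_mul_single]
  rw [HahnSeries.single_mul_single]
  congr 1
  · push_cast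
    ring
  · ring

lemma coeff_sum' (s : Finset ℕ) (f : ℕ → R9) (m : ℤ) :
    (∑ p ∈ s, f p).coeff m = ∑ p ∈ s, (f p).coeff m :=
  map_sum (coeffHom m) f s

lemma coeff_mono (c ch : ℚ) (p t : ℕ) (μ : Fin 2 →₀ ℕ) :
    MvPolynomial.coeff μ (MvPolynomial.C c * MvPolynomial.X 1 ^ p *
      (MvPolynomial.X 0 ^ t * MvPolynomial.C ch)) =
    c * ch * (if Finsupp.single 1 p + Finsupp.single 0 t = μ then 1 else 0) := by
  have h : MvPolynomial.C c * MvPolynomial.X 1 ^ p *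
        (MvPolynomial.X 0 ^ t * MvPolynomial.C ch)
      = MvPolynomial.C (c * ch) * ((MvPolynomial.X (1 : Fin 2) : MvPolynomial (Fin 2) ℚ) ^ p * MvPolynomial.X 0 ^ t) := by
    rw [map_mul]
    ring
  rw [h, MvPolynomial.coeff_C_mul, MvPolynomial.X_pow_eq_monomial,
    MvPolynomial.X_pow_eq_monomial, MvPolynomial.monomial_mul, one_mul,
    MvPolynomial.coeff_monomial, mul_assoc]

lemma fins_iff (p t i j : ℕ) :
    (Finsupp.single (1 : Fin 2) p + Finsupp.single (0 : Fin 2) t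
      = Finsupp.single (0 : Fin 2) i + Finsupp.single (1 : Fin 2) j) ↔ (p = j ∧ t = i) := by
  constructor
  · intro h
    have h0 := DFunLike.congr_fun h 0
    have h1 := DFunLike.congr_fun h 1
    simp [Finsupp.single_apply] at h0 h1
    exact ⟨h1, h0⟩
  · rintro ⟨rfl, rfl⟩
    exact add_comm _ _


/-- If `V` is the power series in `t` with zero constant term satisfying
`V = t(z + (u + w/u)V + V²)`, then the coefficient of `w^i z^j t^n u^{n+1-2i-2j}`
in `V` equals `(n-1)! / (i! (j-1)! j! (n+1-i-2j)!)`. -/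
theorem bipolar_lagrange_coeff (V : PowerSeries R9)
    (h0 : PowerSeries.constantCoeff V = 0)
    (hV : V = PowerSeries.X *
        (PowerSeries.C z9 + PowerSeries.C (u9 + w9 * uinv9) * V + V ^ 2))
    (n i j : ℕ) (hn : 1 ≤ n) (hj : 1 ≤ j) (hij : i + 2 * j ≤ n + 1) :
    MvPolynomial.coeff (Finsupp.single 0 i + Finsupp.single 1 j)
        (((PowerSeries.coeff n V)).coeff ((n : ℤ) + 1 - 2 * i - 2 * j)) =
      (Nat.factorial (n - 1) : ℚ) /
        ((Nat.factorial i : ℚ) * (Nat.factorial (j - 1) : ℚ) *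
          (Nat.factorial j : ℚ) * (Nat.factorial (n + 1 - i - 2 * j) : ℚ)) := by
  have key := main_lemma V h0 hV n 1 le_rfl
  rw [pow_one] at key
  rw [key]
  rw [T9, coeff_sum', MvPolynomial.coeff_sum]
  have hterm : ∀ p ∈ range (n+2),
      MvPolynomial.coeff (Finsupp.single 0 i + Finsupp.single 1 j)
        ((q9 (co n 1 p) * z9 ^ p * a9 ^ (n + 1 - 2*p)).coeff ((n : ℤ) + 1 - 2 * i - 2 * j))
      = if p = j then co n 1 j * (((n+1-2*j).choose i : ℕ) : ℚ) else 0 := by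
    intro p hp
    rw [term_eq, coeff_sum']
    simp only [HahnSeries.coeff_single]
    rw [MvPolynomial.coeff_sum]
    by_cases hpj : p = j
    · subst hpj
      rw [if_pos rfl]
      rw [Finset.sum_eq_single (n + 1 - 2*p - i)]
      · have hc : ((n:ℤ) + 1 - 2*i - 2*p) = ((n + 1 - 2*p - i : ℕ) : ℤ)
            - ((n + 1 - 2*p - (n + 1 - 2*p - i) : ℕ) : ℤ) := by omega
        have ht : n + 1 - 2*p - (n + 1 - 2*p - i) = i := by omega
        rw [if_pos hc, ht, coeff_mono,
          if_pos ((fins_iff p i i p).mpr ⟨rfl, rfl⟩), mul_one,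
          Nat.choose_symm (by omega)]
      · intro s hs hsne
        have ht : ¬(Finsupp.single (1 : Fin 2) p + Finsupp.single (0 : Fin 2) (n + 1 - 2*p - s)
            = Finsupp.single (0 : Fin 2) i + Finsupp.single (1 : Fin 2) p) := by
          rw [fins_iff]
          rintro ⟨-, h2⟩
          rw [Finset.mem_range] at hs
          omega
        split
        · rw [coeff_mono, if_neg ht, mul_zero]
        · simp
      · intro h
        exfalso
        exact h (Finset.mem_range.mpr (by omega))
    · rw [if_neg hpj]
      refine Finset.sum_eq_zero fun s hs => ?_
      have ht : ¬(Finsupp.single (1 : Fin 2) p + Finsupp.single (0 : Fin 2) (n + 1 - 2*p - s)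
          = Finsupp.single (0 : Fin 2) i + Finsupp.single (1 : Fin 2) j) := by
        rw [fins_iff]
        rintro ⟨h1, -⟩
        exact hpj h1
      split
      · rw [coeff_mono, if_neg ht, mul_zero]
      · simp
  rw [Finset.sum_congr rfl hterm, Finset.sum_ite_eq' (range (n+2)) j,
    if_pos (Finset.mem_range.mpr (by omega))]
  -- final arithmetic
  rw [co_of hj (by omega)]
  have hie : i ≤ n + 1 - 2*j := by omega
  have hcc : (((n+1-2*j).choose i : ℕ) : ℚ) * (Nat.factorial i) * (Nat.factorial (n+1-i-2*j))
      = (Nat.factorial (n+1-2*j)) := by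
    have := Nat.choose_mul_factorial_mul_factorial hie
    have h2 : n + 1 - 2*j - i = n + 1 - i - 2*j := by omega
    rw [h2] at this
    exact_mod_cast congrArg (Nat.cast : ℕ → ℚ) this
  have Fne : ∀ m : ℕ, (Nat.factorial m : ℚ) ≠ 0 :=
    fun m => Nat.cast_ne_zero.mpr (Nat.factorial_ne_zero _)
  have F1 := Fne i; have F2 := Fne (j-1); have F3 := Fne j
  have F4 := Fne (n+1-i-2*j); have F5 := Fne (n+1-2*j); have F6 := Fne (n-1)
  field_simp
  linear_combination hcc
end

section
/- For all natural numbers n, \sum_{i+j=n} \binom{2n}{2i}\, C_i\, C_j = \frac{(2n)!\,(2n+2)!}{n!\,(n+1)!^2\,(n+2)!}, where C_k = \binom{2k}{k}/(k+1) is the k-th Catalan number. -/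
open Finset Nat

private lemma cat_q (m : ℕ) :
    (catalan m : ℚ) = ((2 * m)! : ℚ) / ((m ! : ℚ) * ((m + 1)! : ℚ)) := by
  have h := succ_mul_catalan_eq_centralBinom m
  have hc : ((m.centralBinom : ℕ) : ℚ) = ((2 * m)! : ℚ) / ((m ! : ℚ) * (m ! : ℚ)) := by
    rw [Nat.centralBinom, Nat.cast_choose ℚ (by omega : m ≤ 2 * m),
      show 2 * m - m = m from by omega]
  have h2 : ((m : ℚ) + 1) * (catalan m : ℚ) = ((2 * m)! : ℚ) / ((m ! : ℚ) * (m ! : ℚ)) := by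
    rw [← hc]
    exact_mod_cast congrArg (Nat.cast : ℕ → ℚ) h
  have hm : (m ! : ℚ) ≠ 0 := by exact_mod_cast m.factorial_ne_zero
  have hm1 : ((m + 1)! : ℚ) ≠ 0 := by exact_mod_cast (m + 1).factorial_ne_zero
  have hfs : ((m + 1)! : ℚ) = ((m : ℚ) + 1) * (m ! : ℚ) := by
    rw [Nat.factorial_succ]; push_cast; ring
  field_simp [hfs] at h2 ⊢
  linear_combination h2 + (catalan m : ℚ) * (m ! : ℚ) * hfs

private lemma F_q (i j : ℕ) :
    (((2 * i + 2 * j).choose (2 * i) * catalan i * catalan j : ℕ) : ℚ) =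
      ((2 * (i + j))! : ℚ) /
        ((i ! : ℚ) * ((i + 1)! : ℚ) * (j ! : ℚ) * ((j + 1)! : ℚ)) := by
  push_cast
  rw [Nat.cast_choose ℚ (by omega : 2 * i ≤ 2 * i + 2 * j), cat_q, cat_q]
  have e1 : 2 * i + 2 * j - 2 * i = 2 * j := by omega
  have e2 : 2 * i + 2 * j = 2 * (i + j) := by omega
  rw [e1, e2]
  have h1 : ((2 * i)! : ℚ) ≠ 0 := by exact_mod_cast (2 * i).factorial_ne_zero
  have h2 : ((2 * j)! : ℚ) ≠ 0 := by exact_mod_cast (2 * j).factorial_ne_zero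
  have h3 : (i ! : ℚ) ≠ 0 := by exact_mod_cast i.factorial_ne_zero
  have h4 : ((i + 1)! : ℚ) ≠ 0 := by exact_mod_cast (i + 1).factorial_ne_zero
  have h5 : (j ! : ℚ) ≠ 0 := by exact_mod_cast j.factorial_ne_zero
  have h6 : ((j + 1)! : ℚ) ≠ 0 := by exact_mod_cast (j + 1).factorial_ne_zero
  field_simp

/-- WZ certificate for the identity. -/
private noncomputable def gq (n k : ℕ) : ℚ :=
  2 * k * (k + 1) * (2 * n + 1) * ((3 * (n : ℚ) + 5) - 2 * k) * ((2 * n)! : ℚ) /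
    ((k ! : ℚ) * ((k + 1)! : ℚ) * ((n + 1 - k)! : ℚ) * ((n + 2 - k)! : ℚ))

private lemma gq_zero (n : ℕ) : gq n 0 = 0 := by simp [gq]

private lemma key (k j : ℕ) :
    ((k : ℚ) + j + 2) * ((k : ℚ) + j + 3) *
        (((2 * k + 2 * (j + 1)).choose (2 * k) * catalan k * catalan (j + 1) : ℕ) : ℚ)
      - 4 * (2 * (k : ℚ) + 2 * j + 1) * (2 * (k : ℚ) + 2 * j + 3) *
        (((2 * k + 2 * j).choose (2 * k) * catalan k * catalan j : ℕ) : ℚ)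
    = gq (k + j) k - gq (k + j) (k + 1) := by
  rw [F_q, F_q]
  unfold gq
  rw [show k + j + 1 - k = j + 1 from by omega, show k + j + 2 - k = j + 2 from by omega,
      show k + j + 1 - (k + 1) = j from by omega, show k + j + 2 - (k + 1) = j + 1 from by omega]
  have hb : ((k ! : ℕ) : ℚ) ≠ 0 := by exact_mod_cast k.factorial_ne_zero
  have hc : ((j ! : ℕ) : ℚ) ≠ 0 := by exact_mod_cast j.factorial_ne_zero
  have ha : (((2 * (k + j))! : ℕ) : ℚ) ≠ 0 := by exact_mod_cast (2 * (k + j)).factorial_ne_zero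
  have fk1 : (((k + 1)! : ℕ) : ℚ) = ((k : ℚ) + 1) * (k ! : ℚ) := by
    rw [Nat.factorial_succ]; push_cast; ring
  have fk2 : (((k + 1 + 1)! : ℕ) : ℚ) = ((k : ℚ) + 2) * (((k : ℚ) + 1) * (k ! : ℚ)) := by
    rw [Nat.factorial_succ, Nat.factorial_succ]; push_cast; ring
  have fj1 : (((j + 1)! : ℕ) : ℚ) = ((j : ℚ) + 1) * (j ! : ℚ) := by
    rw [Nat.factorial_succ]; push_cast; ring
  have fj2 : (((j + 2)! : ℕ) : ℚ) = ((j : ℚ) + 2) * (((j : ℚ) + 1) * (j ! : ℚ)) := by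
    rw [show j + 2 = j + 1 + 1 from rfl, Nat.factorial_succ, Nat.factorial_succ]; push_cast; ring
  have fa2 : (((2 * (k + (j + 1)))! : ℕ) : ℚ) =
      (2 * (k : ℚ) + 2 * j + 2) * ((2 * (k : ℚ) + 2 * j + 1) * ((2 * (k + j))! : ℚ)) := by
    rw [show 2 * (k + (j + 1)) = 2 * (k + j) + 1 + 1 from by omega,
      Nat.factorial_succ, Nat.factorial_succ]
    push_cast; ring
  rw [fk2, fj2, fa2, fk1, fj1]
  have h1 : ((k : ℚ) + 1) ≠ 0 := by positivity
  have h2 : ((k : ℚ) + 2) ≠ 0 := by positivity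
  have h3 : ((j : ℚ) + 1) ≠ 0 := by positivity
  have h4 : ((j : ℚ) + 2) ≠ 0 := by positivity
  push_cast
  field_simp
  ring

private lemma boundary (n : ℕ) :
    ((n : ℚ) + 2) * ((n : ℚ) + 3) * (catalan (n + 1) : ℚ) = gq n (n + 1) := by
  rw [cat_q]
  unfold gq
  rw [show n + 1 - (n + 1) = 0 from by omega, show n + 2 - (n + 1) = 1 from by omega,
    show 2 * (n + 1) = 2 * n + 1 + 1 from by omega, Nat.factorial_succ, Nat.factorial_succ,
    show n + 1 + 1 = n + 2 from rfl]
  have h1 : ((n + 1)! : ℚ) ≠ 0 := by exact_mod_cast (n + 1).factorial_ne_zero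
  have h2 : ((n + 2)! : ℚ) ≠ 0 := by exact_mod_cast (n + 2).factorial_ne_zero
  have h3 : ((2 * n)! : ℚ) ≠ 0 := by exact_mod_cast (2 * n).factorial_ne_zero
  simp only [Nat.factorial_zero, Nat.factorial_one]
  push_cast
  field_simp
  ring

private noncomputable def Ssum (n : ℕ) : ℚ :=
  ∑ k ∈ Finset.range (n + 1),
    (((2 * n).choose (2 * k) * catalan k * catalan (n - k) : ℕ) : ℚ)

private lemma recurrence (n : ℕ) :
    ((n : ℚ) + 2) * ((n : ℚ) + 3) * Ssum (n + 1)
      = 4 * (2 * (n : ℚ) + 1) * (2 * (n : ℚ) + 3) * Ssum n := by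
  unfold Ssum
  rw [Finset.sum_range_succ, mul_add, Finset.mul_sum, Finset.mul_sum]
  have hlast : ((n : ℚ) + 2) * ((n : ℚ) + 3) *
      (((2 * (n + 1)).choose (2 * (n + 1)) * catalan (n + 1)
          * catalan (n + 1 - (n + 1)) : ℕ) : ℚ) = gq n (n + 1) := by
    rw [show n + 1 - (n + 1) = 0 from by omega, Nat.choose_self, catalan_zero, one_mul, mul_one,
      boundary]
  rw [hlast]
  have hk : ∀ k ∈ Finset.range (n + 1),
      ((n : ℚ) + 2) * ((n : ℚ) + 3) *
          (((2 * (n + 1)).choose (2 * k) * catalan k * catalan (n + 1 - k) : ℕ) : ℚ)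
        = 4 * (2 * (n : ℚ) + 1) * (2 * (n : ℚ) + 3) *
            (((2 * n).choose (2 * k) * catalan k * catalan (n - k) : ℕ) : ℚ)
          + (gq n k - gq n (k + 1)) := by
    intro k hkmem
    rw [Finset.mem_range] at hkmem
    obtain ⟨j, rfl⟩ : ∃ j, n = k + j := ⟨n - k, by omega⟩
    have e1 : 2 * (k + j + 1) = 2 * k + 2 * (j + 1) := by omega
    have e2 : k + j + 1 - k = j + 1 := by omega
    have e3 : 2 * (k + j) = 2 * k + 2 * j := by omega
    have e4 : k + j - k = j := by omega
    rw [e1, e2, e3, e4]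
    have h := key k j
    push_cast at h ⊢
    linear_combination h
  rw [Finset.sum_congr rfl hk, Finset.sum_add_distrib, Finset.sum_range_sub' (gq n), gq_zero]
  ring

private lemma cat_rec (m : ℕ) :
    ((m : ℚ) + 2) * (catalan (m + 1) : ℚ) = 2 * (2 * (m : ℚ) + 1) * (catalan m : ℚ) := by
  rw [cat_q, cat_q,
    show 2 * (m + 1) = 2 * m + 1 + 1 from by omega, Nat.factorial_succ, Nat.factorial_succ,
    show m + 1 + 1 = m + 2 from rfl,
    show (m + 2)! = (m + 2) * (m + 1)! from rfl,
    show (m + 1)! = (m + 1) * m ! from rfl]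
  have h1 : (m ! : ℚ) ≠ 0 := by exact_mod_cast m.factorial_ne_zero
  have h3 : ((2 * m)! : ℚ) ≠ 0 := by exact_mod_cast (2 * m).factorial_ne_zero
  have h4 : ((m : ℚ) + 1) ≠ 0 := by positivity
  have h5 : ((m : ℚ) + 2) ≠ 0 := by positivity
  push_cast
  field_simp
  ring

private lemma Ssum_eq (n : ℕ) : Ssum n = (catalan n : ℚ) * (catalan (n + 1) : ℚ) := by
  induction n with
  | zero => simp [Ssum]
  | succ n ih =>
    have hrec := recurrence n
    rw [ih] at hrec
    have c1 := cat_rec n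
    have c2 := cat_rec (n + 1)
    push_cast at c2
    have key2 : ((n : ℚ) + 2) * ((n : ℚ) + 3) *
        ((catalan (n + 1) : ℚ) * (catalan (n + 2) : ℚ))
        = 4 * (2 * (n : ℚ) + 1) * (2 * (n : ℚ) + 3) *
            ((catalan n : ℚ) * (catalan (n + 1) : ℚ)) := by
      linear_combination ((n : ℚ) + 3) * (catalan (n + 2) : ℚ) * c1
        + 2 * (2 * (n : ℚ) + 1) * (catalan n : ℚ) * c2
    have h23 : ((n : ℚ) + 2) * ((n : ℚ) + 3) ≠ 0 := by positivity
    have hfin : ((n : ℚ) + 2) * ((n : ℚ) + 3) * Ssum (n + 1)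
        = ((n : ℚ) + 2) * ((n : ℚ) + 3) *
            ((catalan (n + 1) : ℚ) * (catalan (n + 2) : ℚ)) := by
      linear_combination hrec - key2
    exact mul_left_cancel₀ h23 hfin

theorem tree_rooted_maps_total (n : ℕ) :
    ((∑ i ∈ Finset.range (n + 1),
        Nat.choose (2 * n) (2 * i) * catalan i * catalan (n - i) : ℕ) : ℚ) =
      ((Nat.factorial (2 * n) : ℚ) * (Nat.factorial (2 * n + 2) : ℚ)) /
        ((Nat.factorial n : ℚ) * (Nat.factorial (n + 1) : ℚ) ^ 2 *
          (Nat.factorial (n + 2) : ℚ)) := by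
  have hs : ((∑ i ∈ Finset.range (n + 1),
      Nat.choose (2 * n) (2 * i) * catalan i * catalan (n - i) : ℕ) : ℚ) = Ssum n := by
    rw [Nat.cast_sum]; rfl
  rw [hs, Ssum_eq, cat_q, cat_q,
    show 2 * (n + 1) = 2 * n + 2 from by omega,
    show n + 1 + 1 = n + 2 from rfl]
  have h1 : (n ! : ℚ) ≠ 0 := by exact_mod_cast n.factorial_ne_zero
  have h2 : ((n + 1)! : ℚ) ≠ 0 := by exact_mod_cast (n + 1).factorial_ne_zero
  have h3 : ((n + 2)! : ℚ) ≠ 0 := by exact_mod_cast (n + 2).factorial_ne_zero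
  field_simp
end

section
/- Let U \equiv U(t,y) be the unique formal power series in t with zero constant term satisfying U = t\,\frac{y + U/y}{1 - Uy}. Then the coefficient of t^n y^{3i-n+2} in U equals \frac{1}{n}\binom{n}{i+1}\binom{n+i-1}{i} for n \ge 1 and appropriate i. -/
open PowerSeries HahnSeries Finset

set_option maxHeartbeats 1000000

noncomputable local instance : Field (LaurentSeries ℚ) := inferInstance

local instance : CharZero (LaurentSeries ℚ) :=
  charZero_of_injective_algebraMap (algebraMap ℚ (LaurentSeries ℚ)).injective

lemma aux_res {K : Type*} [Field K] [CharZero K] (E : PowerSeries K) (Eu : (PowerSeries K)ˣ)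
    (hEu : (Eu : PowerSeries K) = E) (p : ℕ) (hp : 1 ≤ p) :
    PowerSeries.coeff (R := K) p ((d⁄dX K (X * E)) * ((Eu⁻¹ : (PowerSeries K)ˣ) : PowerSeries K) ^ (p+1)) = 0 := by
  set Einv : PowerSeries K := ((Eu⁻¹ : (PowerSeries K)ˣ) : PowerSeries K) with hEinv_def
  have hEE : E * Einv = 1 := by
    rw [hEinv_def, ← hEu, ← Units.val_mul, mul_inv_cancel, Units.val_one]
  have hEne : E ≠ 0 := by rw [← hEu]; exact Eu.ne_zero
  have hU' : d⁄dX K (X * E) = E + X * d⁄dX K E := by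
    rw [Derivation.leibniz, smul_eq_mul, smul_eq_mul, derivative_X, mul_one]; ring
  have e2 : E ^ p * Einv ^ p = 1 := by rw [← mul_pow, hEE, one_pow]
  have e1 : E ^ (p+1) * Einv ^ (p+1) = 1 := by rw [← mul_pow, hEE, one_pow]
  have hpow : E ^ (p-1) * E = E ^ p := by
    rw [← pow_succ]; congr 1; omega
  have h4 : d⁄dX K (E ^ p) = (p : PowerSeries K) * E ^ (p-1) * d⁄dX K E := by
    rw [Derivation.leibniz_pow, smul_eq_mul, nsmul_eq_mul]; ring
  have h3 : E ^ p * d⁄dX K (Einv ^ p) + Einv ^ p * d⁄dX K (E ^ p) = 0 := by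
    have : d⁄dX K (E ^ p * Einv ^ p) = 0 := by rw [e2]; exact Derivation.map_one_eq_zero _
    rw [Derivation.leibniz, smul_eq_mul, smul_eq_mul] at this
    exact this
  have e3 : E ^ (p+1) * d⁄dX K (Einv ^ p) = -(p : PowerSeries K) * d⁄dX K E := by
    linear_combination E * h3 - (E * Einv ^ p) * h4 -
      ((p : PowerSeries K) * d⁄dX K E * Einv ^ p) * hpow - ((p : PowerSeries K) * d⁄dX K E) * e2
  have hmain : (p : PowerSeries K) * (d⁄dX K (X * E) * Einv ^ (p+1)) =
      (p : PowerSeries K) * Einv ^ p - X * d⁄dX K (Einv ^ p) := by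
    apply mul_left_cancel₀ (pow_ne_zero (p+1) hEne)
    linear_combination ((p : PowerSeries K) * (d⁄dX K (X * E))) * e1 -
      ((p : PowerSeries K) * E) * e2 + X * e3 + (p : PowerSeries K) * hU'
  have hXD : ∀ f : PowerSeries K, PowerSeries.coeff (R := K) p (X * d⁄dX K f) =
      PowerSeries.coeff (R := K) p f * p := by
    intro f
    rw [show p = p - 1 + 1 by omega, PowerSeries.coeff_succ_X_mul, PowerSeries.coeff_derivative]
    push_cast [show p - 1 + 1 = p by omega, Nat.cast_sub hp]
    ring
  have hc := congrArg (PowerSeries.coeff (R := K) p) hmain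
  rw [map_sub] at hc
  rw [← map_natCast (PowerSeries.C (R := K)) p, PowerSeries.coeff_C_mul, PowerSeries.coeff_C_mul] at hc
  rw [hXD] at hc
  have hp0 : ((p : K)) ≠ 0 := Nat.cast_ne_zero.mpr (by omega)
  have hz : (p : K) * PowerSeries.coeff (R := K) p (d⁄dX K (X * E) * Einv ^ (p+1)) = 0 := by
    rw [hc]; ring
  exact (mul_eq_zero.mp hz).resolve_left hp0

/-- Truncated inverse of `(1-X)^n`. -/
lemma aux_dvd (n : ℕ) (hn : 1 ≤ n) :
    (Polynomial.X : Polynomial ℚ) ^ n ∣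
      (1 - Polynomial.X) ^ n *
        (∑ k ∈ Finset.range n, Polynomial.C ((n - 1 + k).choose (n - 1) : ℚ) * Polynomial.X ^ k)
        - 1 := by
  rw [Polynomial.X_pow_dvd_iff]
  intro d hd
  rw [← Polynomial.coeff_coe]
  push_cast [Polynomial.coe_sub, Polynomial.coe_mul, Polynomial.coe_pow, Polynomial.coe_one,
    Polynomial.coe_X, Polynomial.coe_C]
  rw [map_sub]
  set I : PowerSeries ℚ := ((invOneSubPow ℚ n : (PowerSeries ℚ)ˣ) : PowerSeries ℚ) with hI
  have hIcoeff : ∀ v : ℕ, PowerSeries.coeff (R := ℚ) v I = ((n - 1 + v).choose (n - 1) : ℚ) := by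
    intro v
    rw [hI, invOneSubPow_val_eq_mk_sub_one_add_choose_of_pos ℚ n hn, PowerSeries.coeff_mk]
  have hmain : PowerSeries.coeff (R := ℚ) d
      ((1 - X) ^ n * ∑ k ∈ Finset.range n, PowerSeries.C (R := ℚ) ((n - 1 + k).choose (n - 1) : ℚ) * X ^ k)
      = PowerSeries.coeff (R := ℚ) d ((1 - X) ^ n * I) := by
    rw [PowerSeries.coeff_mul, PowerSeries.coeff_mul]
    apply Finset.sum_congr rfl
    rintro ⟨u, v⟩ huv
    have hv : v < n := by
      have := Finset.HasAntidiagonal.mem_antidiagonal.mp huv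
      omega
    congr 1
    rw [hIcoeff v]
    simp only [map_sum, PowerSeries.coeff_C_mul, PowerSeries.coeff_X_pow, mul_ite, mul_one, mul_zero]
    rw [Finset.sum_ite_eq (Finset.range n) v (fun k => ((n - 1 + k).choose (n - 1) : ℚ))]
    simp [hv]
  have hone : (1 - X : PowerSeries ℚ) ^ n * I = 1 := by
    rw [hI, ← invOneSubPow_inv_eq_one_sub_pow ℚ n]
    exact (invOneSubPow ℚ n).inv_val
  -- combine
  have hco : ((∑ k ∈ Finset.range n, Polynomial.C ((n - 1 + k).choose (n - 1) : ℚ) * Polynomial.X ^ k : Polynomial ℚ) : PowerSeries ℚ)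
      = ∑ k ∈ Finset.range n, PowerSeries.C (R := ℚ) ((n - 1 + k).choose (n - 1) : ℚ) * X ^ k := by
    simp only [← Polynomial.coeToPowerSeries.ringHom_apply, map_sum, map_mul, map_pow]
    simp [Polynomial.coeToPowerSeries.ringHom_apply, Polynomial.coe_C, Polynomial.coe_X]
  rw [hco, hmain, hone]
  simp

/-- If `U` is the power series in `t` with zero constant term and Laurent
coefficients in `y` satisfying `U(1 - Uy) = t(y + U/y)`, then the coefficient of
`t^n y^{3i-n+2}` in `U` equals `(1/n)·C(n,i+1)·C(n+i-1,i)`. -/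
theorem tree_rooted_lagrange (U : PowerSeries (LaurentSeries ℚ))
    (h0 : PowerSeries.constantCoeff (R := LaurentSeries ℚ) U = 0)
    (hU : U * (1 - U * PowerSeries.C (R := LaurentSeries ℚ) (HahnSeries.single (1 : ℤ) 1)) =
      PowerSeries.X * (PowerSeries.C (R := LaurentSeries ℚ) (HahnSeries.single (1 : ℤ) 1) +
        U * PowerSeries.C (R := LaurentSeries ℚ) (HahnSeries.single (-1 : ℤ) 1)))
    (n i : ℕ) (hn : 1 ≤ n) :
    (PowerSeries.coeff (R := LaurentSeries ℚ) n U).coeff (3 * (i : ℤ) - n + 2) =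
      (1 / (n : ℚ)) * (Nat.choose n (i + 1) : ℚ) * (Nat.choose (n + i - 1) i : ℚ) := by
  classical
  set y : LaurentSeries ℚ := HahnSeries.single (1 : ℤ) 1 with hy_def
  set y' : LaurentSeries ℚ := HahnSeries.single (-1 : ℤ) 1 with hy'_def
  have hyy' : y * y' = 1 := by
    rw [hy_def, hy'_def, single_mul_single]; norm_num
  -- U = X * E
  obtain ⟨E, hXE⟩ : (X : PowerSeries (LaurentSeries ℚ)) ∣ U := PowerSeries.X_dvd_iff.mpr h0
  have hE : E * (1 - X * E * PowerSeries.C (R := LaurentSeries ℚ) y) =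
      PowerSeries.C (R := LaurentSeries ℚ) y + X * E * PowerSeries.C (R := LaurentSeries ℚ) y' := by
    apply mul_left_cancel₀ (PowerSeries.X_ne_zero (R := LaurentSeries ℚ))
    rw [hXE] at hU
    rw [← mul_assoc, ← hU]
  have hE0 : PowerSeries.constantCoeff (R := LaurentSeries ℚ) E = y := by
    have := congrArg (PowerSeries.constantCoeff (R := LaurentSeries ℚ)) hE
    simpa using this
  have hy0 : y ≠ 0 := by
    rw [hy_def]; exact single_ne_zero one_ne_zero
  have hEunit : IsUnit E := by
    rw [PowerSeries.isUnit_iff_constantCoeff, hE0]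
    exact hy0.isUnit
  obtain ⟨Eu, hEu⟩ := hEunit
  set Einv : PowerSeries (LaurentSeries ℚ) := ((Eu⁻¹ : (PowerSeries (LaurentSeries ℚ))ˣ) : PowerSeries (LaurentSeries ℚ)) with hEinv_def
  have hEEinv : E * Einv = 1 := by
    rw [hEinv_def, ← hEu, ← Units.val_mul, mul_inv_cancel, Units.val_one]
  -- the key residue computation
  have hg : ∀ j : ℕ, PowerSeries.coeff (R := LaurentSeries ℚ) (n-1) ((d⁄dX (LaurentSeries ℚ) U) * (X*E)^j * Einv^n) =
      if j = n - 1 then 1 else 0 := by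
    intro j
    rcases lt_trichotomy j (n-1) with hj | hj | hj
    · -- j < n - 1 : residue lemma
      rw [if_neg (by omega)]
      set p : ℕ := n - 1 - j with hp_def
      have hsplit : (d⁄dX (LaurentSeries ℚ) U) * (X*E)^j * Einv^n =
          (E * Einv)^j * (X^j * ((d⁄dX (LaurentSeries ℚ) (X*E)) * Einv^(p+1))) := by
        rw [hXE, show n = j + (p+1) by omega, _root_.pow_add, mul_pow]; ring
      rw [hsplit, hEEinv, one_pow, one_mul, show n - 1 = p + j by omega,
        PowerSeries.coeff_X_pow_mul, hEinv_def]
      exact aux_res (K := LaurentSeries ℚ) E Eu hEu p (by omega)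
    · -- j = n - 1
      rw [if_pos hj, hj]
      have hsplit : (d⁄dX (LaurentSeries ℚ) U) * (X*E)^(n-1) * Einv^n =
          X^(n-1) * ((d⁄dX (LaurentSeries ℚ) U) * E^(n-1) * Einv^n) := by
        rw [mul_pow]; ring
      rw [hsplit]
      have hcm := PowerSeries.coeff_X_pow_mul
        ((d⁄dX (LaurentSeries ℚ) U) * E^(n-1) * Einv^n) (n-1) 0
      rw [zero_add] at hcm
      rw [hcm, PowerSeries.coeff_zero_eq_constantCoeff]
      rw [map_mul, map_mul, map_pow, map_pow, hE0]
      have hcc1 : PowerSeries.constantCoeff (R := LaurentSeries ℚ) (d⁄dX (LaurentSeries ℚ) U) = y := by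
        rw [← PowerSeries.coeff_zero_eq_constantCoeff_apply, PowerSeries.coeff_derivative,
          hXE, PowerSeries.coeff_succ_X_mul, ← hE0]
        simp [PowerSeries.coeff_zero_eq_constantCoeff]
      set w : LaurentSeries ℚ := PowerSeries.constantCoeff (R := LaurentSeries ℚ) Einv with hw_def
      have hyw : y * w = 1 := by
        rw [← hE0, hw_def, ← map_mul, hEEinv, map_one]
      rw [hcc1]
      calc y * y^(n-1) * w^n = (y * w)^n := by
            rw [← pow_succ', show n - 1 + 1 = n by omega]; ring
        _ = 1 := by rw [hyw, one_pow]
    · -- j > n - 1, i.e. j ≥ n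
      rw [if_neg (by omega)]
      have h1 : (X : PowerSeries (LaurentSeries ℚ))^n ∣ (X*E)^j :=
        dvd_trans (pow_dvd_pow X (by omega : n ≤ j)) ⟨E^j, by rw [mul_pow]⟩
      have h2 : (X : PowerSeries (LaurentSeries ℚ))^n ∣
          (d⁄dX (LaurentSeries ℚ) U) * (X*E)^j * Einv^n :=
        (h1.mul_left _).mul_right _
      exact PowerSeries.X_pow_dvd_iff.mp h2 (n-1) (by omega)
  -- the truncated inverse of V^n
  set S : PowerSeries (LaurentSeries ℚ) := ∑ k ∈ Finset.range n,
      (((n - 1 + k).choose (n - 1) : PowerSeries (LaurentSeries ℚ))) * (X * E * PowerSeries.C (R := LaurentSeries ℚ) y)^k with hS_def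
  obtain ⟨Q, hQ⟩ : ∃ Q : PowerSeries (LaurentSeries ℚ),
      (1 - X * E * PowerSeries.C (R := LaurentSeries ℚ) y)^n * S = 1 + X^n * Q := by
    obtain ⟨qp, hqp⟩ := aux_dvd n hn
    set z : PowerSeries (LaurentSeries ℚ) := X * E * PowerSeries.C (R := LaurentSeries ℚ) y with hz_def
    have := congrArg (Polynomial.aeval z) (sub_eq_iff_eq_add.mp hqp)
    simp only [map_add, map_sub, map_mul, map_pow, map_one, map_sum, Polynomial.aeval_X,
      Polynomial.aeval_C, map_natCast] at this
    refine ⟨E^n * (PowerSeries.C (R := LaurentSeries ℚ) y)^n * Polynomial.aeval z qp, ?_⟩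
    rw [hS_def]
    have hzn : z^n = X^n * (E^n * (PowerSeries.C (R := LaurentSeries ℚ) y)^n) := by
      rw [hz_def]; rw [mul_pow, mul_pow]; ring
    calc (1 - z)^n * ∑ k ∈ Finset.range n,
          (((n - 1 + k).choose (n - 1) : PowerSeries (LaurentSeries ℚ))) * z^k
        = z^n * Polynomial.aeval z qp + 1 := this
      _ = 1 + X^n * (E^n * (PowerSeries.C (R := LaurentSeries ℚ) y)^n * Polynomial.aeval z qp) := by
          rw [hzn]; ring
  -- E^n in terms of B^n * S
  set B : PowerSeries (LaurentSeries ℚ) := PowerSeries.C (R := LaurentSeries ℚ) y + X * E * PowerSeries.C (R := LaurentSeries ℚ) y' with hB_def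
  have hEn : E^n = B^n * S - X^n * (E^n * Q) := by
    have h1 : E^n * ((1 - X * E * PowerSeries.C (R := LaurentSeries ℚ) y)^n * S) = B^n * S := by
      rw [← mul_assoc, ← mul_pow, hE]
    rw [hQ] at h1
    ring_nf at h1 ⊢
    linear_combination h1
  -- main identity
  have key : (n : LaurentSeries ℚ) * (PowerSeries.coeff (R := LaurentSeries ℚ) n U) =
      ∑ a ∈ Finset.range (n+1), ∑ k ∈ Finset.range n,
        (if a + k = n - 1 then
          HahnSeries.single ((n:ℤ) - 2*a + k) ((n.choose a : ℚ) * (((n-1+k).choose (n-1) : ℚ)))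
         else 0) := by
    have hgoal1 : (n : LaurentSeries ℚ) * (PowerSeries.coeff (R := LaurentSeries ℚ) n U) =
        PowerSeries.coeff (R := LaurentSeries ℚ) (n-1) (d⁄dX (LaurentSeries ℚ) U) := by
      rw [PowerSeries.coeff_derivative, show n - 1 + 1 = n by omega]
      push_cast [Nat.cast_sub hn]
      ring
    have hone : d⁄dX (LaurentSeries ℚ) U * Einv^n * E^n = d⁄dX (LaurentSeries ℚ) U := by
      rw [mul_assoc, ← mul_pow, mul_comm Einv E, hEEinv, one_pow, mul_one]
    have hBn : B^n = ∑ a ∈ Finset.range (n+1),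
        (X*E*PowerSeries.C (R := LaurentSeries ℚ) y')^a * (PowerSeries.C (R := LaurentSeries ℚ) y)^(n-a) *
          (n.choose a : PowerSeries (LaurentSeries ℚ)) := by
      rw [hB_def, add_comm, add_pow]
    have hzero : PowerSeries.coeff (R := LaurentSeries ℚ) (n-1)
        (d⁄dX (LaurentSeries ℚ) U * Einv^n * (X^n * (E^n * Q))) = 0 :=
      PowerSeries.X_pow_dvd_iff.mp
        ⟨d⁄dX (LaurentSeries ℚ) U * Einv^n * (E^n * Q), by ring⟩ (n-1) (by omega)
    have hterm : ∀ a ∈ Finset.range (n+1), ∀ k ∈ Finset.range n,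
        PowerSeries.coeff (R := LaurentSeries ℚ) (n-1) (d⁄dX (LaurentSeries ℚ) U * Einv^n *
          ((X*E*PowerSeries.C (R := LaurentSeries ℚ) y')^a * (PowerSeries.C (R := LaurentSeries ℚ) y)^(n-a) *
            (n.choose a : PowerSeries (LaurentSeries ℚ)) *
            (((n-1+k).choose (n-1) : PowerSeries (LaurentSeries ℚ)) *
              (X*E*PowerSeries.C (R := LaurentSeries ℚ) y)^k))) =
        (if a + k = n - 1 then
          HahnSeries.single ((n:ℤ) - 2*a + k) ((n.choose a : ℚ) * (((n-1+k).choose (n-1) : ℚ)))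
         else 0) := by
      intro a ha k hk
      have han : a ≤ n := by
        have := Finset.mem_range.mp ha; omega
      have hsc : PowerSeries.C (R := LaurentSeries ℚ)
          (HahnSeries.single ((n:ℤ) - 2*a + k) ((n.choose a : ℚ) * (((n-1+k).choose (n-1) : ℚ)))) =
          (PowerSeries.C (R := LaurentSeries ℚ) y')^a * (PowerSeries.C (R := LaurentSeries ℚ) y)^(n-a) *
            (n.choose a : PowerSeries (LaurentSeries ℚ)) *
            ((n-1+k).choose (n-1) : PowerSeries (LaurentSeries ℚ)) *
            (PowerSeries.C (R := LaurentSeries ℚ) y)^k := by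
        rw [← map_natCast (PowerSeries.C (R := LaurentSeries ℚ)) (n.choose a),
          ← map_natCast (PowerSeries.C (R := LaurentSeries ℚ)) ((n-1+k).choose (n-1))]
        simp only [← map_pow, ← map_mul]
        congr 1
        rw [hy_def, hy'_def, single_pow, single_pow, single_pow, one_pow, one_pow, one_pow]
        rw [show ((n.choose a : LaurentSeries ℚ)) = HahnSeries.single (0:ℤ) ((n.choose a : ℚ)) by
          rw [← HahnSeries.C_apply, map_natCast]]
        rw [show (((n-1+k).choose (n-1) : LaurentSeries ℚ)) =
            HahnSeries.single (0:ℤ) (((n-1+k).choose (n-1) : ℚ)) by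
          rw [← HahnSeries.C_apply, map_natCast]]
        simp only [single_mul_single]
        congr 1
        · congr 1
          simp only [nsmul_eq_mul]
          push_cast [Nat.cast_sub han]
          ring
        · push_cast
          ring
      have hrew : d⁄dX (LaurentSeries ℚ) U * Einv^n *
          ((X*E*PowerSeries.C (R := LaurentSeries ℚ) y')^a * (PowerSeries.C (R := LaurentSeries ℚ) y)^(n-a) *
            (n.choose a : PowerSeries (LaurentSeries ℚ)) *
            (((n-1+k).choose (n-1) : PowerSeries (LaurentSeries ℚ)) *
              (X*E*PowerSeries.C (R := LaurentSeries ℚ) y)^k)) =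
          PowerSeries.C (R := LaurentSeries ℚ)
            (HahnSeries.single ((n:ℤ) - 2*a + k) ((n.choose a : ℚ) * (((n-1+k).choose (n-1) : ℚ)))) *
            (d⁄dX (LaurentSeries ℚ) U * (X*E)^(a+k) * Einv^n) := by
        rw [hsc]; ring
      rw [hrew, PowerSeries.coeff_C_mul, hg (a+k)]
      by_cases hcond : a + k = n - 1
      · rw [if_pos hcond, if_pos hcond, mul_one]
      · rw [if_neg hcond, if_neg hcond, mul_zero]
    calc (n : LaurentSeries ℚ) * (PowerSeries.coeff (R := LaurentSeries ℚ) n U)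
        = PowerSeries.coeff (R := LaurentSeries ℚ) (n-1) (d⁄dX (LaurentSeries ℚ) U) := hgoal1
      _ = PowerSeries.coeff (R := LaurentSeries ℚ) (n-1)
            (d⁄dX (LaurentSeries ℚ) U * Einv^n * E^n) := by rw [hone]
      _ = PowerSeries.coeff (R := LaurentSeries ℚ) (n-1)
            (d⁄dX (LaurentSeries ℚ) U * Einv^n * (B^n * S)) -
          PowerSeries.coeff (R := LaurentSeries ℚ) (n-1)
            (d⁄dX (LaurentSeries ℚ) U * Einv^n * (X^n * (E^n * Q))) := by
          conv_lhs => rw [hEn, mul_sub, map_sub]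
      _ = PowerSeries.coeff (R := LaurentSeries ℚ) (n-1)
            (d⁄dX (LaurentSeries ℚ) U * Einv^n * (B^n * S)) := by rw [hzero, sub_zero]
      _ = ∑ a ∈ Finset.range (n+1), ∑ k ∈ Finset.range n,
          PowerSeries.coeff (R := LaurentSeries ℚ) (n-1) (d⁄dX (LaurentSeries ℚ) U * Einv^n *
          ((X*E*PowerSeries.C (R := LaurentSeries ℚ) y')^a * (PowerSeries.C (R := LaurentSeries ℚ) y)^(n-a) *
            (n.choose a : PowerSeries (LaurentSeries ℚ)) *
            (((n-1+k).choose (n-1) : PowerSeries (LaurentSeries ℚ)) *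
              (X*E*PowerSeries.C (R := LaurentSeries ℚ) y)^k))) := by
          rw [hBn, hS_def, Finset.sum_mul_sum, Finset.mul_sum, map_sum]
          
          exact Finset.sum_congr rfl fun a _ => by rw [Finset.mul_sum, map_sum]
      _ = ∑ a ∈ Finset.range (n+1), ∑ k ∈ Finset.range n,
        (if a + k = n - 1 then
          HahnSeries.single ((n:ℤ) - 2*a + k) ((n.choose a : ℚ) * (((n-1+k).choose (n-1) : ℚ)))
         else 0) := by
          exact Finset.sum_congr rfl fun a ha => Finset.sum_congr rfl fun k hk => hterm a ha k hk
  -- final extraction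
  have hred : (n : LaurentSeries ℚ) * PowerSeries.coeff (R := LaurentSeries ℚ) n U =
      ∑ a ∈ Finset.range n, HahnSeries.single ((n:ℤ) - 2*a + ((n-1-a : ℕ) : ℤ))
        ((n.choose a : ℚ) * (((n-1+(n-1-a)).choose (n-1) : ℚ))) := by
    rw [key, Finset.sum_range_succ]
    have hlast : (∑ k ∈ Finset.range n, (if n + k = n - 1 then
        HahnSeries.single ((n:ℤ) - 2*n + k) ((n.choose n : ℚ) * (((n-1+k).choose (n-1) : ℚ)))
       else 0)) = 0 := Finset.sum_eq_zero fun k hk => if_neg (by omega)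
    rw [hlast, add_zero]
    refine Finset.sum_congr rfl fun a ha => ?_
    have ha' : a < n := Finset.mem_range.mp ha
    have hcc : ∀ k ∈ Finset.range n, (if a + k = n - 1 then
        HahnSeries.single ((n:ℤ) - 2*a + k) ((n.choose a : ℚ) * (((n-1+k).choose (n-1) : ℚ)))
       else 0) = (if k = n - 1 - a then
        HahnSeries.single ((n:ℤ) - 2*a + k) ((n.choose a : ℚ) * (((n-1+k).choose (n-1) : ℚ)))
       else 0) := by
      intro k hk
      exact if_congr (by omega) rfl rfl
    rw [Finset.sum_congr rfl hcc, Finset.sum_ite_eq' (Finset.range n) (n-1-a)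
      (fun k => HahnSeries.single ((n:ℤ) - 2*a + k) ((n.choose a : ℚ) * (((n-1+k).choose (n-1) : ℚ)))),
      if_pos (Finset.mem_range.mpr (by omega))]
  -- apply the Hahn series coefficient at 3i - n + 2
  set e : ℤ := 3*(i:ℤ) - n + 2 with he_def
  let φ : LaurentSeries ℚ →+ ℚ :=
    { toFun := fun v => v.coeff e
      map_zero' := HahnSeries.coeff_zero
      map_add' := fun v w => HahnSeries.coeff_add }
  have hco := congrArg φ hred
  have hφ : ∀ v : LaurentSeries ℚ, φ v = v.coeff e := fun _ => rfl
  rw [map_sum] at hco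
  have hnat : ((n : LaurentSeries ℚ)) = HahnSeries.single (0:ℤ) ((n:ℚ)) := by
    rw [← HahnSeries.C_apply, map_natCast]
  rw [hφ, hnat, HahnSeries.single_zero_mul_eq_smul, HahnSeries.coeff_smul, smul_eq_mul] at hco
  have single_coeff' : ∀ (E' : ℤ) (q : ℚ), (HahnSeries.single E' q).coeff e =
      if e = E' then q else 0 := fun E' q => by
    simp [HahnSeries.coeff_single]
  simp only [hφ, single_coeff'] at hco
  have hn0 : ((n:ℚ)) ≠ 0 := Nat.cast_ne_zero.mpr (by omega)
  by_cases hi : i < n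
  · -- the term a = n - 1 - i survives
    have hcc2 : ∀ a ∈ Finset.range n, (if e = (n:ℤ) - 2*a + ((n-1-a : ℕ) : ℤ) then
        ((n.choose a : ℚ) * (((n-1+(n-1-a)).choose (n-1) : ℚ))) else 0) =
        (if a = n - 1 - i then
        ((n.choose a : ℚ) * (((n-1+(n-1-a)).choose (n-1) : ℚ))) else 0) := by
      intro a ha
      have ha' : a < n := Finset.mem_range.mp ha
      have hiff : (e = (n:ℤ) - 2*a + ((n-1-a : ℕ) : ℤ)) ↔ (a = n - 1 - i) := by
        rw [he_def]; omega
      simp only [hiff]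
    rw [Finset.sum_congr rfl hcc2, Finset.sum_ite_eq' (Finset.range n) (n-1-i) _,
      if_pos (Finset.mem_range.mpr (by omega))] at hco
    rw [show n - 1 - (n-1-i) = i by omega] at hco
    have hb1 : n.choose (n-1-i) = n.choose (i+1) := by
      rw [show n-1-i = n - (i+1) by omega]
      exact Nat.choose_symm (by omega)
    have hb2 : (n-1+i).choose (n-1) = (n+i-1).choose i := by
      have h2 := Nat.choose_symm (show i ≤ n-1+i by omega)
      rw [show (n-1+i) - i = n-1 by omega] at h2
      rw [show (n+i-1 : ℕ) = n-1+i by omega]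
      exact h2
    rw [hb1, hb2] at hco
    field_simp
    linear_combination hco
  · -- no term survives; both sides are 0
    have hcc2 : ∀ a ∈ Finset.range n, (if e = (n:ℤ) - 2*a + ((n-1-a : ℕ) : ℤ) then
        ((n.choose a : ℚ) * (((n-1+(n-1-a)).choose (n-1) : ℚ))) else 0) = 0 := by
      intro a ha
      have ha' : a < n := Finset.mem_range.mp ha
      refine if_neg ?_
      rw [he_def]
      omega
    rw [Finset.sum_congr rfl hcc2, Finset.sum_const_zero] at hco
    have : (PowerSeries.coeff (R := LaurentSeries ℚ) n U).coeff e = 0 :=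
      (mul_eq_zero.mp hco).resolve_left hn0
    rw [he_def] at this
    rw [this, Nat.choose_eq_zero_of_lt (by omega : n < i + 1)]
    simp
end

section
/- For all natural numbers n and i with 0 \le 3i - n, the identity \frac{1}{n+1}\binom{n+1}{i+1}\binom{n+i}{i} - \frac{2}{n}\binom{n}{i+1}\binom{n+i-1}{i} = \frac{3i-n}{(i+1)(n+i)}\binom{n}{i}\binom{n+i}{i} holds (for n \ge 1). -/
theorem tree_rooted_triangulations_identity (n i : ℕ) (hn : 1 ≤ n) (hni : n ≤ 3 * i) :
    (1 / ((n : ℚ) + 1)) * (Nat.choose (n + 1) (i + 1) : ℚ) * (Nat.choose (n + i) i : ℚ)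
      - (2 / (n : ℚ)) * (Nat.choose n (i + 1) : ℚ) * (Nat.choose (n + i - 1) i : ℚ) =
    ((3 * (i : ℚ) - n) / (((i : ℚ) + 1) * ((n : ℚ) + i))) *
      (Nat.choose n i : ℚ) * (Nat.choose (n + i) i : ℚ) := by
  have hN : (n : ℚ) ≠ 0 := by positivity
  have hN1 : (n : ℚ) + 1 ≠ 0 := by positivity
  have hI1 : (i : ℚ) + 1 ≠ 0 := by positivity
  have hNI : (n : ℚ) + i ≠ 0 := by positivity
  by_cases hin : i ≤ n
  · -- key recurrences as ℚ equalities
    have h1 : ((i : ℚ) + 1) * (Nat.choose (n + 1) (i + 1) : ℚ)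
        = ((n : ℚ) + 1) * (Nat.choose n i : ℚ) := by
      have := Nat.add_one_mul_choose_eq n i
      have := congrArg (fun x : ℕ => (x : ℚ)) this
      push_cast at this
      linarith
    have h2 : ((i : ℚ) + 1) * (Nat.choose n (i + 1) : ℚ)
        = ((n : ℚ) - i) * (Nat.choose n i : ℚ) := by
      have := Nat.choose_succ_right_eq n i
      have := congrArg (fun x : ℕ => (x : ℚ)) this
      push_cast [hin] at this
      linarith
    have h3 : (n : ℚ) * (Nat.choose (n + i) i : ℚ)
        = ((n : ℚ) + i) * (Nat.choose (n + i - 1) i : ℚ) := by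
      have e1 : n + i - 1 + 1 = n + i := by omega
      have e2 : n - 1 + 1 = n := by omega
      have hs := Nat.add_one_mul_choose_eq (n + i - 1) (n - 1)
      rw [e1, e2] at hs
      have hsym1 : Nat.choose (n + i) n = Nat.choose (n + i) i := by
        rw [← Nat.choose_symm (Nat.le_add_left i n)]
        congr 1
        omega
      have hsym2 : Nat.choose (n + i - 1) (n - 1) = Nat.choose (n + i - 1) i := by
        rw [← Nat.choose_symm (by omega : i ≤ n + i - 1)]
        congr 1
        omega
      rw [hsym1, hsym2] at hs
      have := congrArg (fun x : ℕ => (x : ℚ)) hs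
      push_cast at this
      linarith
    field_simp
    linear_combination ((n:ℚ) * ((n:ℚ)+i) * (Nat.choose (n + i) i : ℚ)) * h1
        - 2 * ((n:ℚ)+1) * ((n:ℚ)+i) * (Nat.choose (n + i - 1) i : ℚ) * h2
        + 2 * ((n:ℚ)+1) * ((n:ℚ)-i) * (Nat.choose n i : ℚ) * h3
  · push_neg at hin
    rw [Nat.choose_eq_zero_of_lt hin, Nat.choose_eq_zero_of_lt (by omega : n < i + 1),
      Nat.choose_eq_zero_of_lt (by omega : n + 1 < i + 1)]
    push_cast
    ring
end

section
/- For every natural number m \ge 1, the sum over j from 2 to m+1 of \frac{j(j-1)(3m-j-1)!}{m!\,(m+1)!\,(m-j+1)!} equals \frac{(3m)!}{(4m^2-1)\,m!^2\,(m+1)!}. -/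
noncomputable def gAux (m i : ℕ) : ℚ :=
  if i < m then
    (((i : ℚ) + 2) ^ 2 * (2 * (m : ℚ) - 1) + ((m : ℚ) + 1)) *
        (Nat.factorial (3 * m - i - 2) : ℚ) /
      ((4 * (m : ℚ) ^ 2 - 1) * (Nat.factorial m : ℚ) * (Nat.factorial (m + 1) : ℚ) *
        (Nat.factorial (m - 1 - i) : ℚ))
  else 0

theorem bipolar_orientations_sum (m : ℕ) (hm : 1 ≤ m) :
    ∑ j ∈ Finset.Icc 2 (m + 1),
        ((j : ℚ) * ((j : ℚ) - 1) * (Nat.factorial (3 * m - j - 1) : ℚ)) /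
          ((Nat.factorial m : ℚ) * (Nat.factorial (m + 1) : ℚ) *
            (Nat.factorial (m + 1 - j) : ℚ)) =
      (Nat.factorial (3 * m) : ℚ) /
        ((4 * (m : ℚ) ^ 2 - 1) * (Nat.factorial m : ℚ) ^ 2 *
          (Nat.factorial (m + 1) : ℚ)) := by
  have hmQ : (1 : ℚ) ≤ (m : ℚ) := by exact_mod_cast hm
  have h4 : (4 * (m : ℚ) ^ 2 - 1) ≠ 0 := by nlinarith
  have hM1 : (Nat.factorial m : ℚ) ≠ 0 := by positivity
  have hM2 : (Nat.factorial (m + 1) : ℚ) ≠ 0 := by positivity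
  have hIcc : Finset.Icc 2 (m + 1) = Finset.Ico 2 (m + 2) := rfl
  rw [hIcc, Finset.sum_Ico_eq_sum_range]
  have hrange : m + 2 - 2 = m := by omega
  rw [hrange]
  have key : ∀ i ∈ Finset.range m,
      (((2 + i : ℕ) : ℚ) * (((2 + i : ℕ) : ℚ) - 1) *
          (Nat.factorial (3 * m - (2 + i) - 1) : ℚ)) /
        ((Nat.factorial m : ℚ) * (Nat.factorial (m + 1) : ℚ) *
          (Nat.factorial (m + 1 - (2 + i)) : ℚ)) = gAux m i - gAux m (i + 1) := by
    intro i hi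
    rw [Finset.mem_range] at hi
    obtain ⟨k, hk⟩ : ∃ k, m = i + k + 1 := ⟨m - i - 1, by omega⟩
    rcases Nat.eq_zero_or_pos k with hk0 | hkpos
    · -- last term: i = m - 1
      subst hk0
      have h1 : 3 * m - (2 + i) - 1 = 2 * i := by omega
      have h2 : m + 1 - (2 + i) = 0 := by omega
      have h3 : 3 * m - i - 2 = 2 * i + 1 := by omega
      have h4' : m - 1 - i = 0 := by omega
      have hlt : i < m := by omega
      have hlt' : ¬ (i + 1 < m) := by omega
      rw [gAux, gAux, if_pos hlt, if_neg hlt', h1, h2, h3, h4']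
      have hmc : (m : ℚ) = (i : ℚ) + 1 := by
        rw [hk]; push_cast; ring
      have hfs : (Nat.factorial (2 * i + 1) : ℚ) = (2 * (i : ℚ) + 1) * (Nat.factorial (2 * i) : ℚ) := by
        rw [Nat.factorial_succ]; push_cast; ring
      have hF : (Nat.factorial (2 * i) : ℚ) ≠ 0 := by positivity
      rw [hfs, hmc]
      simp only [Nat.factorial_zero, Nat.cast_one]
      have h4i : (4 * ((i : ℚ) + 1) ^ 2 - 1) ≠ 0 := by
        nlinarith [Nat.cast_nonneg (α := ℚ) i]
      rw [show 4 * ((i : ℚ) + 1) ^ 2 - 1 = (2 * (i : ℚ) + 1) * (2 * (i : ℚ) + 3) by ring]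
      field_simp
      push_cast
      ring
    · obtain ⟨k', rfl⟩ : ∃ k', k = k' + 1 := ⟨k - 1, by omega⟩
      have h1 : 3 * m - (2 + i) - 1 = 2 * i + 3 * k' + 3 := by omega
      have h2 : m + 1 - (2 + i) = k' + 1 := by omega
      have h3 : 3 * m - i - 2 = 2 * i + 3 * k' + 4 := by omega
      have h4' : m - 1 - i = k' + 1 := by omega
      have h5 : 3 * m - (i + 1) - 2 = 2 * i + 3 * k' + 3 := by omega
      have h6 : m - 1 - (i + 1) = k' := by omega
      have hlt : i < m := by omega
      have hlt' : i + 1 < m := by omega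
      rw [gAux, gAux, if_pos hlt, if_pos hlt', h1, h2, h3, h4', h5, h6]
      have hmc : (m : ℚ) = (i : ℚ) + (k' : ℚ) + 2 := by
        rw [hk]; push_cast; ring
      have hfs1 : (Nat.factorial (2 * i + 3 * k' + 4) : ℚ) =
          (2 * (i : ℚ) + 3 * (k' : ℚ) + 4) * (Nat.factorial (2 * i + 3 * k' + 3) : ℚ) := by
        have : 2 * i + 3 * k' + 4 = (2 * i + 3 * k' + 3) + 1 := by omega
        rw [this, Nat.factorial_succ]; push_cast; ring
      have hfs2 : (Nat.factorial (k' + 1) : ℚ) = ((k' : ℚ) + 1) * (Nat.factorial k' : ℚ) := by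
        rw [Nat.factorial_succ]; push_cast; ring
      have hF : (Nat.factorial (2 * i + 3 * k' + 3) : ℚ) ≠ 0 := by positivity
      have hK : (Nat.factorial k' : ℚ) ≠ 0 := by positivity
      rw [hfs1, hfs2, hmc]
      have h4'' : (4 * ((i : ℚ) + (k' : ℚ) + 2) ^ 2 - 1) ≠ 0 := by nlinarith [Nat.cast_nonneg (α := ℚ) i, Nat.cast_nonneg (α := ℚ) k']
      rw [show 4 * ((i : ℚ) + (k' : ℚ) + 2) ^ 2 - 1 = (2 * (i : ℚ) + 2 * (k' : ℚ) + 3) * (2 * (i : ℚ) + 2 * (k' : ℚ) + 5) by ring]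
      field_simp
      push_cast
      ring
  rw [Finset.sum_congr rfl key, Finset.sum_range_sub']
  have hgm : gAux m m = 0 := by rw [gAux, if_neg (lt_irrefl m)]
  rw [hgm, sub_zero, gAux, if_pos (by omega : 0 < m)]
  obtain ⟨n, rfl⟩ : ∃ n, m = n + 1 := ⟨m - 1, by omega⟩
  have h1 : 3 * (n + 1) - 0 - 2 = 3 * n + 1 := by omega
  have h2 : (n + 1) - 1 - 0 = n := by omega
  have h3 : 3 * (n + 1) = (3 * n + 1) + 1 + 1 := by omega
  rw [h1, h2, h3]
  have hfs1 : (Nat.factorial ((3 * n + 1) + 1 + 1) : ℚ) =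
      (3 * (n : ℚ) + 3) * (3 * (n : ℚ) + 2) * (Nat.factorial (3 * n + 1) : ℚ) := by
    rw [Nat.factorial_succ, Nat.factorial_succ]; push_cast; ring
  have hfs2 : (Nat.factorial (n + 1) : ℚ) = ((n : ℚ) + 1) * (Nat.factorial n : ℚ) := by
    rw [Nat.factorial_succ]; push_cast; ring
  have hF : (Nat.factorial (3 * n + 1) : ℚ) ≠ 0 := by positivity
  have hN : (Nat.factorial n : ℚ) ≠ 0 := by positivity
  have hN1 : ((n : ℚ) + 1) ≠ 0 := by positivity
  rw [hfs1, hfs2]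
  push_cast at h4 ⊢
  field_simp
  ring
end
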